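/- arXiv:2603.23709 — 7 statements merged into one kernel-verified Lean document; each statement's English description precedes it below -/
import Mathlib

section
/- Every nonzero derivation D of the polynomial ring K[X] in one variable over a field K of characteristic zero that is locally finite has the form D = (aX + b) d/dX for some a, b ∈ K. -/
/-!
A `K`-linear map satisfying the Leibniz rule is a derivation of `K[X]`, hence is determined by
its value `p = D X`: `D = p • d/dX`. If `deg p ≥ 2`, each application of `D` raises the degree
by `deg p - 1 ≥ 1`, so the orbit `X, D X, D² X, …` has unbounded degree and cannot span a
finite-dimensional space.
-/

namespace Polynomial

theorem eq_mul_derivative_of_leibniz {R : Type*} [CommRing R] (D : R[X] → R[X])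
    (hadd : ∀ f g : R[X], D (f + g) = D f + D g)
    (hsmul : ∀ (c : R) (f : R[X]), D (c • f) = c • D f)
    (hLeibniz : ∀ f g : R[X], D (f * g) = f * D g + g * D f) (f : R[X]) :
    D f = D X * derivative f := by
  let d : Derivation R R[X] R[X] := Derivation.mk' ⟨⟨D, hadd⟩, hsmul⟩ hLeibniz
  have hd : d = mkDerivation R (D X) := derivation_ext (mkDerivation_X R (D X)).symm
  calc D f = d f := rfl
    _ = derivative f * D X := by rw [hd, mkDerivation_apply, smul_eq_mul]
    _ = D X * derivative f := mul_comm _ _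

theorem natDegree_iterate_mul_derivative_X {R : Type*} [CommRing R] [IsDomain R]
    [IsAddTorsionFree R] {p : R[X]} (hp : p.natDegree ≠ 0) (n : ℕ) :
    ((fun f => p * derivative f)^[n] X).natDegree = n * (p.natDegree - 1) + 1 := by
  induction n with
  | zero => simp
  | succ n ih =>
    have hp0 : p ≠ 0 := by rintro rfl; simp at hp
    have hderiv : derivative ((fun f => p * derivative f)^[n] X) ≠ 0 := by
      rw [derivative_ne_zero, ih]; omega
    rw [Function.iterate_succ_apply', natDegree_mul hp0 hderiv, natDegree_derivative, ih,
      add_mul, one_mul]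
    omega

theorem exists_natDegree_le_of_fg {R : Type*} [Semiring R] {M : Submodule R R[X]}
    (hM : M.FG) : ∃ N : ℕ, ∀ f ∈ M, f.natDegree ≤ N := by
  obtain ⟨S, rfl⟩ := hM
  obtain ⟨N, hN⟩ := span_le_degreeLE_of_finite S.finite_toSet
  exact ⟨N, fun f hf => natDegree_le_iff_degree_le.mpr (mem_degreeLE.mp (hN hf))⟩

end Polynomial

open Polynomial

theorem locallyFinite_derivation_polynomial_one_var_general
    {K : Type*} [Field K] [CharZero K]
    (D : Polynomial K → Polynomial K)
    (hadd : ∀ f g : Polynomial K, D (f + g) = D f + D g)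
    (hsmul : ∀ (c : K) (f : Polynomial K), D (c • f) = c • D f)
    (hLeibniz : ∀ f g : Polynomial K, D (f * g) = f * D g + g * D f)
    (hlf : ∀ f : Polynomial K,
      FiniteDimensional K (Submodule.span K (Set.range fun n : ℕ => D^[n] f))) :
    ∃ a b : K, ∀ f : Polynomial K,
      D f = (Polynomial.C a * Polynomial.X + Polynomial.C b) * Polynomial.derivative f := by
  have hD : D = fun f => D X * derivative f :=
    funext (eq_mul_derivative_of_leibniz D hadd hsmul hLeibniz)
  have hdeg : (D X).natDegree ≤ 1 := by
    by_contra! hgt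
    obtain ⟨N, hN⟩ := exists_natDegree_le_of_fg
      ((Submodule.fg_iff_finiteDimensional _).mpr (hlf X))
    have hbound := hN _ (Submodule.subset_span ⟨N, rfl⟩)
    rw [hD, natDegree_iterate_mul_derivative_X (by omega)] at hbound
    have := Nat.le_mul_of_pos_right N (Nat.sub_pos_of_lt hgt)
    omega
  refine ⟨(D X).coeff 1, (D X).coeff 0, fun f => ?_⟩
  rw [← eq_X_add_C_of_natDegree_le_one hdeg]
  exact congrFun hD f

/-- Every nonzero locally finite derivation of `K[X]` has the form
`D = (aX + b) d/dX`. -/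
theorem locallyFinite_derivation_polynomial_one_var
    {K : Type*} [Field K] [CharZero K]
    (D : Polynomial K → Polynomial K)
    (hadd : ∀ f g : Polynomial K, D (f + g) = D f + D g)
    (hsmul : ∀ (c : K) (f : Polynomial K), D (c • f) = c • D f)
    (hLeibniz : ∀ f g : Polynomial K, D (f * g) = f * D g + g * D f)
    (hD0 : D ≠ 0)
    (hlf : ∀ f : Polynomial K,
      FiniteDimensional K (Submodule.span K (Set.range fun n : ℕ => D^[n] f))) :
    ∃ a b : K, ∀ f : Polynomial K,
      D f = (Polynomial.C a * Polynomial.X + Polynomial.C b) * Polynomial.derivative f :=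
  locallyFinite_derivation_polynomial_one_var_general D hadd hsmul hLeibniz hlf
end

section
/- Let D be a locally nilpotent derivation of a commutative K-algebra B with char K = 0. Then the isotropy group of D equals the isotropy group of exp(D): an automorphism φ commutes with D if and only if φ commutes with exp(D). -/
/-!
`φ` commutes with `D` (resp. `exp D`) iff conjugation by `φ` fixes it, and conjugation carries
the pair `(D, exp D)` to `(φ D φ⁻¹, φ exp(D) φ⁻¹)`; so it suffices that `D` and `exp D` determine
each other. On a vector `b` with `Dᴺ b = 0`, `exp D` acts as the truncation below degree `N` of the
series `e^X` evaluated at `D`, and such truncations compose like the power series themselves.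
Hence `(exp D)^m b = ∑_{j<N} mʲ/j! • Dʲ b`, since `(e^X)^m = e^{mX}` in `K⟦X⟧`. The left side
only depends on `exp D`, and in characteristic `0` a polynomial in `m` with vector coefficients is
determined by its values at the natural numbers, so its linear coefficient `D b` is too.
-/

/-- `E` is the exponential of the locally nilpotent map `D`. -/
def IsExpOf (K : Type*) {B : Type*} [Field K] [CommRing B] [Algebra K B]
    (D E : B → B) : Prop :=
  ∀ b : B, ∃ n : ℕ, D^[n] b = 0 ∧
    E b = ∑ j ∈ Finset.range n, ((j.factorial : K)⁻¹) • D^[j] b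

open Polynomial PowerSeries

namespace Module.End

variable {R M : Type*} [CommRing R] [AddCommGroup M] [Module R M]
  {f : Module.End R M} {N : ℕ} {v : M}

theorem pow_apply_aeval_apply_eq_zero (hv : (f ^ N) v = 0) (p : R[X]) :
    (f ^ N) (aeval f p v) = 0 := by
  have hcomm : Commute (f ^ N) (aeval f p) := by
    simpa using (Commute.all (Polynomial.X ^ N) p).map (aeval f)
  rw [← mul_apply, hcomm.eq, mul_apply, hv, map_zero]

theorem aeval_apply_eq_aeval_trunc_apply (hv : (f ^ N) v = 0) (p : R[X]) :
    aeval f p v = aeval f (trunc N (p : R⟦X⟧)) v := by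
  obtain ⟨q, hq⟩ : Polynomial.X ^ N ∣ p - trunc N (p : R⟦X⟧) :=
    Polynomial.X_pow_dvd_iff.2 fun d hd => by simp [coeff_trunc, hd]
  rw [← sub_eq_zero, ← LinearMap.sub_apply, ← map_sub, hq, mul_comm, map_mul, mul_apply,
    map_pow, aeval_X, hv, map_zero]

theorem aeval_trunc_mul_apply (hv : (f ^ N) v = 0) (F G : R⟦X⟧) :
    aeval f (trunc N (F * G)) v = aeval f (trunc N F) (aeval f (trunc N G) v) := by
  rw [← trunc_trunc_mul_trunc, ← Polynomial.coe_mul, ← aeval_apply_eq_aeval_trunc_apply hv,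
    map_mul, mul_apply]

theorem aeval_trunc_apply_of_le {n : ℕ} (hv : (f ^ n) v = 0) (h : n ≤ N) (F : R⟦X⟧) :
    aeval f (trunc N F) v = aeval f (trunc n F) v := by
  rw [aeval_apply_eq_aeval_trunc_apply hv, trunc_trunc_of_le F h]

theorem aeval_trunc_apply (F : R⟦X⟧) :
    aeval f (trunc N F) v = ∑ i ∈ Finset.range N, coeff i F • (f ^ i) v := by
  simp [aeval_def, eval₂_trunc_eq_sum_range, algebraMap_end_apply]

end Module.End

theorem eq_zero_of_forall_sum_natCast_pow_smul_eq_zero {K V : Type*} [Field K] [CharZero K]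
    [AddCommGroup V] [Module K V] {N : ℕ} {c : ℕ → V}
    (h : ∀ m : ℕ, ∑ j ∈ Finset.range N, (m : K) ^ j • c j = 0) {j : ℕ} (hj : j < N) :
    c j = 0 := by
  rw [← Module.forall_dual_apply_eq_zero_iff K]
  intro φ
  set p : K[X] := ∑ i ∈ Finset.range N, monomial i (φ (c i))
  have hroot (m : ℕ) : p.IsRoot (m : K) := by
    simpa [p, eval_finsetSum, mul_comm] using congrArg φ (h m)
  have hp : p = 0 := p.eq_zero_of_infinite_isRoot <|
    Set.infinite_of_injective_forall_mem Nat.cast_injective hroot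
  simpa [p, finsetSum_coeff, Polynomial.coeff_monomial, hj] using congrArg (·.coeff j) hp

namespace IsExpOf

variable {K B : Type*} [Field K] [CommRing B] [Algebra K B] {f g : Module.End K B}
  {E E' : B → B} {N : ℕ} {b : B}

theorem conj (hE : IsExpOf K f E) (e : B ≃ₗ[K] B) :
    IsExpOf K (e.conj f) (e ∘ E ∘ e.symm) := by
  have hsemiconj : Function.Semiconj e f (e.conj f) := fun x => by simp [LinearEquiv.conj_apply]
  have hiterate (j : ℕ) (x : B) : (e.conj f)^[j] x = e (f^[j] (e.symm x)) := by
    rw [(hsemiconj.iterate_right j).eq, e.apply_symm_apply]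
  intro b
  obtain ⟨n, hn, hEb⟩ := hE (e.symm b)
  exact ⟨n, by rw [hiterate, hn, map_zero], by simp [hEb, hiterate]⟩

variable [CharZero K]

theorem apply_eq_aeval_trunc_exp (hE : IsExpOf K f E) (hb : (f ^ N) b = 0) :
    E b = aeval f (trunc N (exp K)) b := by
  obtain ⟨n, hn, hEb⟩ := hE b
  rw [← Module.End.pow_apply] at hn
  have hEb' : E b = aeval f (trunc n (exp K)) b := by
    simp [hEb, Module.End.aeval_trunc_apply, coeff_exp, Module.End.pow_apply]
  rcases le_total n N with h | h
  · rw [hEb', Module.End.aeval_trunc_apply_of_le hn h]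
  · rw [hEb', Module.End.aeval_trunc_apply_of_le hb h]

theorem unique (hE : IsExpOf K f E) (hE' : IsExpOf K f E') : E = E' := by
  funext b
  obtain ⟨n, hn, -⟩ := hE b
  rw [← Module.End.pow_apply] at hn
  rw [hE.apply_eq_aeval_trunc_exp hn, hE'.apply_eq_aeval_trunc_exp hn]

theorem iterate_apply_eq_aeval_trunc_rescale_exp (hE : IsExpOf K f E) (hb : (f ^ N) b = 0)
    (m : ℕ) :
    E^[m] b = aeval f (trunc N (rescale (m : K) (exp K))) b := by
  rw [← exp_pow_eq_rescale_exp]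
  induction m with
  | zero =>
    rw [pow_zero, ← Polynomial.coe_one, ← Module.End.aeval_apply_eq_aeval_trunc_apply hb]
    simp
  | succ m ih =>
    rw [Function.iterate_succ_apply', ih, pow_succ', Module.End.aeval_trunc_mul_apply hb,
      hE.apply_eq_aeval_trunc_exp (Module.End.pow_apply_aeval_apply_eq_zero hb _)]

theorem injective (hf : IsExpOf K f E) (hg : IsExpOf K g E) : f = g := by
  ext b
  obtain ⟨n₁, hn₁, -⟩ := hf b
  obtain ⟨n₂, hn₂, -⟩ := hg b
  rw [← Module.End.pow_apply] at hn₁ hn₂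
  set N := n₁ + n₂ + 2
  have hfN : (f ^ N) b = 0 := Module.End.pow_map_zero_of_le (by omega) hn₁
  have hgN : (g ^ N) b = 0 := Module.End.pow_map_zero_of_le (by omega) hn₂
  have hsum (m : ℕ) :
      ∑ j ∈ Finset.range N, (m : K) ^ j • (coeff j (exp K) • ((f ^ j) b - (g ^ j) b)) = 0 := by
    have hfg := (hf.iterate_apply_eq_aeval_trunc_rescale_exp hfN m).symm.trans
      (hg.iterate_apply_eq_aeval_trunc_rescale_exp hgN m)
    rw [← sub_eq_zero, Module.End.aeval_trunc_apply, Module.End.aeval_trunc_apply,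
      ← Finset.sum_sub_distrib] at hfg
    simpa only [coeff_rescale, mul_smul, ← smul_sub] using hfg
  simpa [sub_eq_zero] using
    eq_zero_of_forall_sum_natCast_pow_smul_eq_zero hsum (show 1 < N by omega)

end IsExpOf

theorem isotropy_eq_isotropy_exp_of_lnd_general
    {K B : Type*} [Field K] [CharZero K] [CommRing B] [Algebra K B]
    (D E : B → B) (φ : B ≃ₐ[K] B)
    (hadd : ∀ x y : B, D (x + y) = D x + D y)
    (hsmul : ∀ (c : K) (x : B), D (c • x) = c • D x)
    (hE : IsExpOf K D E) :
    (∀ b : B, φ (D b) = D (φ b)) ↔ (∀ b : B, φ (E b) = E (φ b)) := by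
  let Dₗ : Module.End K B := { toFun := D, map_add' := hadd, map_smul' := hsmul }
  let e : B ≃ₗ[K] B := φ.toLinearEquiv
  have hE' : IsExpOf K Dₗ E := hE
  have hD : (∀ b, φ (D b) = D (φ b)) ↔ e.conj Dₗ = Dₗ := by
    rw [LinearMap.ext_iff]
    conv_rhs => rw [φ.surjective.forall]
    refine forall_congr' fun b => ?_
    simp [LinearEquiv.conj_apply, e, Dₗ]
  have hExp : (∀ b, φ (E b) = E (φ b)) ↔ e ∘ E ∘ e.symm = E := by
    rw [funext_iff]
    conv_rhs => rw [φ.surjective.forall]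
    refine forall_congr' fun b => ?_
    simp [e]
  rw [hD, hExp]
  exact ⟨fun h => (h ▸ hE'.conj e).unique hE', fun h => (h ▸ hE'.conj e).injective hE'⟩

/-- For a locally nilpotent derivation `D`, the isotropy group of `D` equals
the isotropy group of `exp(D)`: an automorphism `φ` commutes with `D` iff it
commutes with `exp(D)`. -/
theorem isotropy_eq_isotropy_exp_of_lnd
    {K B : Type*} [Field K] [CharZero K] [CommRing B] [Algebra K B]
    (D E : B → B) (φ : B ≃ₐ[K] B)
    (hadd : ∀ x y : B, D (x + y) = D x + D y)
    (hsmul : ∀ (c : K) (x : B), D (c • x) = c • D x)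
    (hLeibniz : ∀ x y : B, D (x * y) = x * D y + y * D x)
    (hlnd : ∀ b : B, ∃ n : ℕ, D^[n] b = 0)
    (hE : IsExpOf K D E) :
    (∀ b : B, φ (D b) = D (φ b)) ↔ (∀ b : B, φ (E b) = E (φ b)) :=
  isotropy_eq_isotropy_exp_of_lnd_general D E φ hadd hsmul hE
end

section
/- Conversely, for any α, γ ∈ K*, β ∈ K and p ∈ K[X] satisfying f(αX + β) = γ f(X), the K-algebra endomorphism ρ of K[X,Y] defined by ρ(X) = αX + β, ρ(Y) = γY + p(X) is an automorphism commuting with the derivation D = f(X) ∂/∂Y. -/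
open MvPolynomial

noncomputable def fwdHom {K : Type*} [CommRing K] (α β γ : K) (p : Polynomial K) :
    MvPolynomial (Fin 2) K →ₐ[K] MvPolynomial (Fin 2) K :=
  aeval (fun i => if i = 0 then C α * X 0 + C β
    else C γ * X 1 + Polynomial.aeval (X 0 : MvPolynomial (Fin 2) K) p)

noncomputable def bwdHom {K : Type*} [Field K] (α β γ : K) (p : Polynomial K) :
    MvPolynomial (Fin 2) K →ₐ[K] MvPolynomial (Fin 2) K :=
  aeval (fun i => if i = 0 then C α⁻¹ * (X 0 - C β)
    else C γ⁻¹ * (X 1 - Polynomial.aeval (C α⁻¹ * (X 0 - C β) : MvPolynomial (Fin 2) K) p))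

section lemmas
variable {K : Type*} [Field K] (α β γ : K) (p : Polynomial K)

theorem fwd_X0 : fwdHom α β γ p (X 0) = C α * X 0 + C β := by
  simp [fwdHom]

theorem fwd_X1 : fwdHom α β γ p (X 1) =
    C γ * X 1 + Polynomial.aeval (X 0 : MvPolynomial (Fin 2) K) p := by
  simp [fwdHom]

theorem bwd_X0 : bwdHom α β γ p (X 0) = C α⁻¹ * (X 0 - C β) := by
  simp [bwdHom]

theorem bwd_X1 : bwdHom α β γ p (X 1) =
    C γ⁻¹ * (X 1 - Polynomial.aeval (C α⁻¹ * (X 0 - C β) : MvPolynomial (Fin 2) K) p) := by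
  simp [bwdHom]

theorem hom_aeval (φ : MvPolynomial (Fin 2) K →ₐ[K] MvPolynomial (Fin 2) K)
    (x : MvPolynomial (Fin 2) K) (q : Polynomial K) :
    φ (Polynomial.aeval x q) = Polynomial.aeval (φ x) q :=
  (Polynomial.aeval_algHom_apply φ x q).symm

theorem homC (φ : MvPolynomial (Fin 2) K →ₐ[K] MvPolynomial (Fin 2) K) (a : K) :
    φ (C a) = C a := by
  simpa using φ.commutes a

theorem comp_bf (hα : α ≠ 0) (hγ : γ ≠ 0) :
    (bwdHom α β γ p).comp (fwdHom α β γ p) = AlgHom.id K (MvPolynomial (Fin 2) K) := by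
  apply MvPolynomial.algHom_ext
  intro i
  have h0 : bwdHom α β γ p (fwdHom α β γ p (X 0)) = X 0 := by
    rw [fwd_X0, map_add, map_mul, homC, homC, bwd_X0, ← mul_assoc, ← C_mul,
      mul_inv_cancel₀ hα, C_1, one_mul, sub_add_cancel]
  fin_cases i
  · exact h0
  · show bwdHom α β γ p (fwdHom α β γ p (X 1)) = X 1
    rw [fwd_X1, map_add, map_mul, homC, bwd_X1, hom_aeval, bwd_X0, ← mul_assoc, ← C_mul,
      mul_inv_cancel₀ hγ, C_1, one_mul, sub_add_cancel]

theorem comp_fb (hα : α ≠ 0) (hγ : γ ≠ 0) :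
    (fwdHom α β γ p).comp (bwdHom α β γ p) = AlgHom.id K (MvPolynomial (Fin 2) K) := by
  apply MvPolynomial.algHom_ext
  intro i
  have h0' : fwdHom α β γ p (C α⁻¹ * (X 0 - C β)) = X 0 := by
    rw [map_mul, map_sub, homC, homC, fwd_X0, add_sub_cancel_right, ← mul_assoc,
      ← C_mul, inv_mul_cancel₀ hα, C_1, one_mul]
  have h0 : fwdHom α β γ p (bwdHom α β γ p (X 0)) = X 0 := by rw [bwd_X0]; exact h0'
  fin_cases i
  · exact h0
  · show fwdHom α β γ p (bwdHom α β γ p (X 1)) = X 1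
    rw [bwd_X1, map_mul, map_sub, homC, fwd_X1, hom_aeval, h0', add_sub_cancel_right,
      ← mul_assoc, ← C_mul, inv_mul_cancel₀ hγ, C_1, one_mul]

end lemmas

/-- Converse: for any `α, γ ∈ K*`, `β ∈ K`, `p ∈ K[X]` with `f(αX+β) = γ f(X)`,
the substitution `ρ(X) = αX + β`, `ρ(Y) = γY + p(X)` defines an automorphism of
`K[X,Y]` commuting with `D = f(X) ∂/∂Y`. -/
theorem triangular_substitution_commutes
    {K : Type*} [Field K] [CharZero K]
    (f : Polynomial K) (hf : f ≠ 0)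
    (D : Derivation K (MvPolynomial (Fin 2) K) (MvPolynomial (Fin 2) K))
    (hDX : D (X 0) = 0)
    (hDY : D (X 1) = Polynomial.aeval (X 0 : MvPolynomial (Fin 2) K) f)
    (α β γ : K) (p : Polynomial K) (hα : α ≠ 0) (hγ : γ ≠ 0)
    (hres : f.comp (Polynomial.C α * Polynomial.X + Polynomial.C β) = Polynomial.C γ * f) :
    ∃ ρ : MvPolynomial (Fin 2) K ≃ₐ[K] MvPolynomial (Fin 2) K,
      ρ (X 0) = C α * X 0 + C β ∧
      ρ (X 1) = C γ * X 1 + Polynomial.aeval (X 0 : MvPolynomial (Fin 2) K) p ∧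
      ∀ g : MvPolynomial (Fin 2) K, ρ (D g) = D (ρ g) := by
  let ρ : MvPolynomial (Fin 2) K ≃ₐ[K] MvPolynomial (Fin 2) K :=
    AlgEquiv.ofAlgHom (fwdHom α β γ p) (bwdHom α β γ p)
      (comp_fb α β γ p hα hγ) (comp_bf α β γ p hα hγ)
  have hρX : ρ (X 0) = C α * X 0 + C β := fwd_X0 α β γ p
  have hρY : ρ (X 1) = C γ * X 1 + Polynomial.aeval (X 0 : MvPolynomial (Fin 2) K) p :=
    fwd_X1 α β γ p
  -- D vanishes on polynomials in X 0
  have hD0 : ∀ q : Polynomial K, D (Polynomial.aeval (X 0 : MvPolynomial (Fin 2) K) q) = 0 := by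
    intro q
    have hmem : Polynomial.aeval (X 0 : MvPolynomial (Fin 2) K) q ∈
        Algebra.adjoin K ({X 0} : Set (MvPolynomial (Fin 2) K)) := by
      rw [Algebra.adjoin_singleton_eq_range_aeval]
      exact Set.mem_range_self q
    have := Derivation.eqOn_adjoin (D1 := D) (D2 := 0)
      (s := {X 0}) (by intro x hx; simp only [Set.mem_singleton_iff] at hx
                       simp [hx, hDX]) hmem
    simpa using this
  have hρf : ρ (Polynomial.aeval (X 0 : MvPolynomial (Fin 2) K) f) =
      C γ * Polynomial.aeval (X 0 : MvPolynomial (Fin 2) K) f := by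
    have e := Polynomial.aeval_comp (x := (X 0 : MvPolynomial (Fin 2) K)) (p := f)
      (q := Polynomial.C α * Polynomial.X + Polynomial.C β)
    rw [hres, map_mul, Polynomial.aeval_C] at e
    have e2 : (Polynomial.aeval (X 0 : MvPolynomial (Fin 2) K))
        (Polynomial.C α * Polynomial.X + Polynomial.C β) = C α * X 0 + C β := by
      simp [algebraMap_eq]
    rw [e2] at e
    have := hom_aeval (fwdHom α β γ p) (X 0) f
    rw [fwd_X0] at this
    show fwdHom α β γ p _ = _
    rw [this, ← e]
    rfl
  -- conjugated derivation
  let D' : Derivation K (MvPolynomial (Fin 2) K) (MvPolynomial (Fin 2) K) :=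
    { toLinearMap := ρ.symm.toLinearMap ∘ₗ D.toLinearMap ∘ₗ ρ.toLinearMap
      map_one_eq_zero' := by simp
      leibniz' := by
        intro a b
        simp [Derivation.leibniz, smul_eq_mul, map_mul, mul_comm] }
  have hD' : D' = D := by
    apply MvPolynomial.derivation_ext
    intro i
    fin_cases i
    · show ρ.symm (D (ρ (X 0))) = D (X 0)
      rw [hρX]
      simp [hDX, Derivation.leibniz, derivation_C]
    · show ρ.symm (D (ρ (X 1))) = D (X 1)
      rw [hρY, map_add, Derivation.leibniz]
      simp only [hD0, hDY, derivation_C, smul_eq_mul, mul_zero, zero_mul, add_zero, smul_zero]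
      rw [show (C γ : MvPolynomial (Fin 2) K) * Polynomial.aeval (X 0 : MvPolynomial (Fin 2) K) f
          = ρ (Polynomial.aeval (X 0 : MvPolynomial (Fin 2) K) f) from hρf.symm]
      rw [ρ.symm_apply_apply]
  refine ⟨ρ, hρX, hρY, fun g => ?_⟩
  have h2 : ρ.symm (D (ρ g)) = D g := by
    have : D' g = D g := by rw [hD']
    exact this
  calc ρ (D g) = ρ (ρ.symm (D (ρ g))) := by rw [h2]
    _ = D (ρ g) := ρ.apply_symm_apply _
end

section
/- Let K be a field of characteristic zero and D the derivation of K[X,Y] given by D(X) = aX, D(Y) = aY with a ∈ K*. Then an automorphism ρ of K[X,Y] commutes with D if and only if ρ is linear: ρ(X) = αX + βY, ρ(Y) = γX + δY with αδ − βγ ≠ 0. -/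
open MvPolynomial

/-- Isotropy of the scalar derivation `D = aX ∂/∂X + aY ∂/∂Y`, `a ≠ 0`:
an automorphism commutes with `D` iff it is an invertible linear substitution. -/
theorem isotropy_scalar_linear_derivation
    {K : Type*} [Field K] [CharZero K]
    (a : K) (ha : a ≠ 0)
    (D : Derivation K (MvPolynomial (Fin 2) K) (MvPolynomial (Fin 2) K))
    (hDX : D (X 0) = C a * X 0)
    (hDY : D (X 1) = C a * X 1)
    (ρ : MvPolynomial (Fin 2) K ≃ₐ[K] MvPolynomial (Fin 2) K) :
    (∀ g : MvPolynomial (Fin 2) K, ρ (D g) = D (ρ g)) ↔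
      ∃ (α β γ δ : K), α * δ - β * γ ≠ 0 ∧
        ρ (X 0) = C α * X 0 + C β * X 1 ∧
        ρ (X 1) = C γ * X 0 + C δ * X 1 := by
  have hρC : ∀ c : K, ρ (C c) = C c := fun c => by
    simpa [MvPolynomial.algebraMap_eq] using ρ.commutes c
  -- D on monomials
  have Dmono : ∀ (s : Fin 2 →₀ ℕ) (r : K),
      D (monomial s r) = C (a * ((s 0 : K) + (s 1 : K))) * monomial s r := by
    intro s r
    have hD : D = mkDerivation K (fun i : Fin 2 => C a * X i) := by
      apply derivation_ext
      intro i
      fin_cases i <;> simp [mkDerivation_X, hDX, hDY]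
    rw [hD, mkDerivation_monomial]
    rw [Finsupp.sum_fintype _ _ (by intro i; simp)]
    rw [Fin.sum_univ_two]
    have key : ∀ i : Fin 2, monomial (s - Finsupp.single i 1) ((s i : K)) • (C a * X i)
        = C (a * (s i : K)) * monomial s 1 := by
      intro i
      by_cases h : s i = 0
      · simp [h]
      · rw [smul_eq_mul]
        rw [X, C_mul_monomial]
        rw [monomial_mul]
        have hsub : (s - Finsupp.single i 1) + Finsupp.single i 1 = s := by
          ext j
          rcases eq_or_ne j i with hj | hj
          · subst hj; simp [Nat.sub_add_cancel (Nat.one_le_iff_ne_zero.mpr h)]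
          · simp [Finsupp.single_apply, Ne.symm hj]
        rw [hsub, C_mul_monomial]
        congr 1
        ring
    rw [key 0, key 1]
    have hmr : (monomial s r : MvPolynomial (Fin 2) K) = C r * monomial s 1 := by
      rw [C_mul_monomial, mul_one]
    rw [hmr, smul_eq_C_mul]
    simp only [mul_add, C_add, C_mul]
    ring
  -- coefficientwise action of D
  have Dcoeff : ∀ (p : MvPolynomial (Fin 2) K) (m : Fin 2 →₀ ℕ),
      coeff m (D p) = a * ((m 0 : K) + (m 1 : K)) * coeff m p := by
    intro p m
    have hDp : D p = ∑ s ∈ p.support, C (a * ((s 0 : K) + (s 1 : K))) * monomial s (coeff s p) := by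
      conv_lhs => rw [← support_sum_monomial_coeff p]
      rw [map_sum]
      exact Finset.sum_congr rfl fun s _ => Dmono s _
    rw [hDp, coeff_sum]
    by_cases hm : m ∈ p.support
    · rw [Finset.sum_eq_single m
        (fun s _ hs => by rw [coeff_C_mul, coeff_monomial, if_neg hs, mul_zero])
        (fun h => absurd hm h)]
      rw [coeff_C_mul, coeff_monomial, if_pos rfl]
    · rw [Finset.sum_eq_zero fun s hs => by
        rw [coeff_C_mul, coeff_monomial, if_neg (fun h : s = m => hm (h ▸ hs)), mul_zero]]
      rw [notMem_support_iff.mp hm, mul_zero]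
  -- eigenvectors with eigenvalue a are linear forms
  have hlin : ∀ p : MvPolynomial (Fin 2) K, D p = C a * p →
      p = C (coeff (Finsupp.single 0 1) p) * X 0 + C (coeff (Finsupp.single 1 1) p) * X 1 := by
    intro p hp
    have hz : ∀ m : Fin 2 →₀ ℕ, m 0 + m 1 ≠ 1 → coeff m p = 0 := by
      intro m hm
      have h1 : a * ((m 0 : K) + (m 1 : K)) * coeff m p = a * coeff m p := by
        rw [← Dcoeff p m, hp, coeff_C_mul]
      have h2 : a * (((m 0 : K) + (m 1 : K)) - 1) * coeff m p = 0 := by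
        linear_combination h1
      have h3 : ((m 0 : K) + (m 1 : K)) - 1 ≠ 0 := by
        intro h
        apply hm
        have h4 : ((m 0 + m 1 : ℕ) : K) = ((1 : ℕ) : K) := by
          push_cast
          linear_combination h
        exact_mod_cast h4
      rcases mul_eq_zero.mp h2 with h | h
      · exact absurd h (mul_ne_zero ha h3)
      · exact h
    have hne : (Finsupp.single 1 1 : Fin 2 →₀ ℕ) ≠ Finsupp.single 0 1 := by
      intro h
      have := DFunLike.congr_fun h 0
      simp [Finsupp.single_apply] at this
    have hne' : (Finsupp.single 0 1 : Fin 2 →₀ ℕ) ≠ Finsupp.single 1 1 := fun h => hne h.symm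
    ext m
    by_cases h0 : m = Finsupp.single 0 1
    · subst h0
      simp [coeff_add, coeff_C_mul, coeff_X', hne]
    · by_cases h1 : m = Finsupp.single 1 1
      · subst h1
        simp [coeff_add, coeff_C_mul, coeff_X', hne']
      · have hm : m 0 + m 1 ≠ 1 := by
          intro hsum
          have h01 : (m 0 = 1 ∧ m 1 = 0) ∨ (m 0 = 0 ∧ m 1 = 1) := by omega
          rcases h01 with ⟨ha0, ha1⟩ | ⟨ha0, ha1⟩
          · exact h0 (by ext j; fin_cases j <;> simp [Finsupp.single_apply, ha0, ha1])
          · exact h1 (by ext j; fin_cases j <;> simp [Finsupp.single_apply, ha0, ha1])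
        rw [hz m hm]
        have hne0 : (Finsupp.single 0 1 : Fin 2 →₀ ℕ) ≠ m := fun h => h0 h.symm
        have hne1 : (Finsupp.single 1 1 : Fin 2 →₀ ℕ) ≠ m := fun h => h1 h.symm
        simp [coeff_add, coeff_C_mul, coeff_X', hne0, hne1]
  -- extracting coefficients of a linear combination
  have coeffzero : ∀ u v : K, C u * X 0 - C v * X 1 = (0 : MvPolynomial (Fin 2) K) →
      u = 0 ∧ v = 0 := by
    intro u v huv
    have hne : (Finsupp.single 1 1 : Fin 2 →₀ ℕ) ≠ Finsupp.single 0 1 := by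
      intro hh
      have := DFunLike.congr_fun hh 0
      simp [Finsupp.single_apply] at this
    have hne' : (Finsupp.single 0 1 : Fin 2 →₀ ℕ) ≠ Finsupp.single 1 1 := fun h => hne h.symm
    constructor
    · have := congrArg (coeff (Finsupp.single 0 1)) huv
      simpa [coeff_sub, coeff_C_mul, coeff_X', hne] using this
    · have := congrArg (coeff (Finsupp.single 1 1)) huv
      have h2 := this
      simp [coeff_sub, coeff_C_mul, coeff_X', hne'] at h2
      simpa using h2
  constructor
  · -- forward
    intro h
    have heig : ∀ i : Fin 2, D (ρ (X i)) = C a * ρ (X i) := by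
      intro i
      rw [← h (X i)]
      have hi : i = 0 ∨ i = 1 := by omega
      rcases hi with rfl | rfl
      · rw [hDX, map_mul, hρC]
      · rw [hDY, map_mul, hρC]
    set α := coeff (Finsupp.single 0 1) (ρ (X 0)) with hα
    set β := coeff (Finsupp.single 1 1) (ρ (X 0)) with hβ
    set γ := coeff (Finsupp.single 0 1) (ρ (X 1)) with hγ
    set δ := coeff (Finsupp.single 1 1) (ρ (X 1)) with hδ
    have hX0 : ρ (X 0) = C α * X 0 + C β * X 1 := hlin _ (heig 0)
    have hX1 : ρ (X 1) = C γ * X 0 + C δ * X 1 := hlin _ (heig 1)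
    refine ⟨α, β, γ, δ, ?_, hX0, hX1⟩
    intro hdet
    have hA : ρ (C δ * X 0 - C β * X 1) = 0 := by
      rw [map_sub, map_mul, map_mul, hρC, hρC, hX0, hX1]
      have e : C δ * C α - C β * C γ = (0 : MvPolynomial (Fin 2) K) := by
        rw [← C_mul, ← C_mul, ← C_sub, show δ * α - β * γ = α * δ - β * γ by ring, hdet, C_0]
      linear_combination (X 0 : MvPolynomial (Fin 2) K) * e
    have hB : ρ (C γ * X 0 - C α * X 1) = 0 := by
      rw [map_sub, map_mul, map_mul, hρC, hρC, hX0, hX1]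
      have e : C γ * C β - C α * C δ = (0 : MvPolynomial (Fin 2) K) := by
        rw [← C_mul, ← C_mul, ← C_sub, show γ * β - α * δ = -(α * δ - β * γ) - γ * β * 0 by ring]
        rw [hdet]
        simp
      linear_combination (X 1 : MvPolynomial (Fin 2) K) * e
    have hA' : C δ * X 0 - C β * X 1 = (0 : MvPolynomial (Fin 2) K) :=
      ρ.injective (by rw [hA, map_zero])
    have hB' : C γ * X 0 - C α * X 1 = (0 : MvPolynomial (Fin 2) K) :=
      ρ.injective (by rw [hB, map_zero])
    obtain ⟨hδ0, hβ0⟩ := coeffzero _ _ hA'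
    obtain ⟨hγ0, hα0⟩ := coeffzero _ _ hB'
    have : ρ (X 0) = 0 := by rw [hX0, hα0, hβ0]; simp
    have hx : (X 0 : MvPolynomial (Fin 2) K) = 0 := ρ.injective (by rw [this, map_zero])
    exact X_ne_zero 0 hx
  · -- backward
    rintro ⟨α, β, γ, δ, hdet, hX0, hX1⟩ g
    have hgen : ∀ i : Fin 2, ρ (D (X i)) = D (ρ (X i)) := by
      intro i
      have hi : i = 0 ∨ i = 1 := by omega
      rcases hi with rfl | rfl
      · rw [hDX, map_mul, hρC, hX0, map_add, Derivation.leibniz, Derivation.leibniz,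
          derivation_C, derivation_C, hDX, hDY]
        simp only [smul_eq_mul, smul_zero, add_zero, zero_mul, mul_zero]
        ring
      · rw [hDY, map_mul, hρC, hX1, map_add, Derivation.leibniz, Derivation.leibniz,
          derivation_C, derivation_C, hDX, hDY]
        simp only [smul_eq_mul, smul_zero, add_zero, zero_mul, mul_zero]
        ring
    induction g using MvPolynomial.induction_on with
    | C c => simp [hρC]
    | add p q hp hq => rw [map_add, map_add, map_add, hp, hq, map_add]
    | mul_X p i hp =>
      rw [Derivation.leibniz, map_add, smul_eq_mul, smul_eq_mul, map_mul, map_mul,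
        hp, hgen i, map_mul, Derivation.leibniz, smul_eq_mul, smul_eq_mul]
end

section
/- Let K be a field of characteristic zero, a ∈ K*, and D the derivation of K[X,Y] with D(X) = aX + Y, D(Y) = aY. Then an automorphism ρ of K[X,Y] commutes with D if and only if ρ(X) = αX + βY and ρ(Y) = αY for some α ∈ K*, β ∈ K. -/
/-!
Write `D = a E + Y ∂/∂X` with `E = X ∂/∂X + Y ∂/∂Y` the Euler derivation. On the coefficient of
`X^i Y^j`, `D - a` acts as multiplication by `a (i + j - 1)` plus a multiple of the coefficient of
`X^(i+1) Y^(j-1)`. If `ρ` commutes with `D`, then `Q = ρ(Y)` satisfies `D Q = a Q` and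
`P = ρ(X)` satisfies `D P = a P + Q`. Inducting on the exponent of `Y`, and using `a (i + j - 1) ≠ 0`
for `i + j ≠ 1` in characteristic zero, both are linear forms; comparing `Y`-coefficients then forces
`Q = αY` and `P = αX + βY`, with `α ≠ 0` because `ρ` is injective. Conversely, an automorphism
commutes with `D` as soon as it does on `X` and `Y`.
-/

open MvPolynomial

namespace MvPolynomial

variable {R σ : Type*} [CommSemiring R]

theorem coeff_X_mul_pderiv_self (i : σ) (m : σ →₀ ℕ) (p : MvPolynomial σ R) :
    coeff m (X i * pderiv i p) = m i * coeff m p := by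
  classical
  induction p using MvPolynomial.induction_on' with
  | monomial n r =>
    rw [X_mul_pderiv_monomial, coeff_smul, coeff_monomial, nsmul_eq_mul]
    split_ifs with h <;> simp [h]
  | add p q hp hq => rw [map_add, mul_add, coeff_add, hp, hq, coeff_add, mul_add]

theorem coeff_sum_X_mul_pderiv [Fintype σ] (m : σ →₀ ℕ) (p : MvPolynomial σ R) :
    coeff m (∑ i, X i * pderiv i p) = m.degree * coeff m p := by
  simp [coeff_sum, coeff_X_mul_pderiv_self, Finsupp.degree_eq_sum, Finset.sum_mul]

theorem IsHomogeneous.eq_sum_C_mul_X [Fintype σ] {φ : MvPolynomial σ R} (h : φ.IsHomogeneous 1) :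
    φ = ∑ i, C (coeff (Finsupp.single i 1) φ) * X i := by
  have pderiv_eq_C (i : σ) : pderiv i φ = C (coeff (Finsupp.single i 1) φ) := by
    have h₀ := h.pderiv (i := i)
    rw [← totalDegree_zero_iff_isHomogeneous, totalDegree_eq_zero_iff_eq_C] at h₀
    rw [h₀, coeff_pderiv]
    simp
  calc φ = 1 • φ := (one_smul ℕ φ).symm
    _ = ∑ i, X i * pderiv i φ := h.sum_X_mul_pderiv.symm
    _ = ∑ i, C (coeff (Finsupp.single i 1) φ) * X i := by simp only [pderiv_eq_C, mul_comm]

theorem algHom_derivation_comm_of_forall_X {B : Type*} [CommSemiring B] [Algebra R B]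
    (φ : MvPolynomial σ R →ₐ[R] B) (D₁ : Derivation R (MvPolynomial σ R) (MvPolynomial σ R))
    (D₂ : Derivation R B B) (h : ∀ i, φ (D₁ (X i)) = D₂ (φ (X i))) (p : MvPolynomial σ R) :
    φ (D₁ p) = D₂ (φ p) := by
  induction p using MvPolynomial.induction_on with
  | C r => simp
  | add p q hp hq => simp only [map_add, hp, hq]
  | mul_X p i hp => simp only [Derivation.leibniz, smul_eq_mul, map_add, map_mul, hp, h]

end MvPolynomial

section JordanBlock

variable {R : Type*} [CommSemiring R]

noncomputable def jordanDerivation (a : R) :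
    Derivation R (MvPolynomial (Fin 2) R) (MvPolynomial (Fin 2) R) :=
  mkDerivation R ![C a * X 0 + X 1, C a * X 1]

@[simp]
theorem jordanDerivation_X_zero (a : R) : jordanDerivation a (X 0) = C a * X 0 + X 1 :=
  mkDerivation_X ..

@[simp]
theorem jordanDerivation_X_one (a : R) : jordanDerivation a (X 1) = C a * X 1 :=
  mkDerivation_X ..

theorem eq_jordanDerivation {a : R}
    {D : Derivation R (MvPolynomial (Fin 2) R) (MvPolynomial (Fin 2) R)}
    (hDX : D (X 0) = C a * X 0 + X 1) (hDY : D (X 1) = C a * X 1) : D = jordanDerivation a :=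
  derivation_ext <| Fin.forall_fin_two.mpr ⟨by simp [hDX], by simp [hDY]⟩

theorem jordanDerivation_eq (a : R) :
    jordanDerivation a = (C a * X 0 + X 1 : MvPolynomial (Fin 2) R) • pderiv 0 +
      (C a * X 1 : MvPolynomial (Fin 2) R) • pderiv 1 :=
  derivation_ext <| Fin.forall_fin_two.mpr ⟨by simp, by simp⟩

theorem jordanDerivation_apply (a : R) (p : MvPolynomial (Fin 2) R) :
    jordanDerivation a p = C a * ∑ i, X i * pderiv i p + X 1 * pderiv 0 p := by
  simp only [jordanDerivation_eq, Derivation.add_apply, Derivation.smul_apply, smul_eq_mul,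
    Fin.sum_univ_two]
  ring

theorem jordanDerivation_C_mul_X_add_C_mul_X (a u v : R) :
    jordanDerivation a (C u * X 0 + C v * X 1) = C a * (C u * X 0 + C v * X 1) + C u * X 1 := by
  simp only [map_add, Derivation.leibniz, jordanDerivation_X_zero, jordanDerivation_X_one,
    smul_eq_mul, derivation_C, mul_zero, add_zero]
  ring

theorem coeff_jordanDerivation (a : R) (m : Fin 2 →₀ ℕ) (p : MvPolynomial (Fin 2) R) :
    coeff m (jordanDerivation a p) = a * m.degree * coeff m p + coeff m (X 1 * pderiv 0 p) := by
  rw [jordanDerivation_apply, coeff_add, coeff_C_mul, coeff_sum_X_mul_pderiv, mul_assoc]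

end JordanBlock

section JordanBlockField

variable {K : Type*} [Field K] [CharZero K] {a : K}

theorem coeff_eq_zero_of_jordanDerivation_eq (ha : a ≠ 0) {Q : MvPolynomial (Fin 2) K} {c : K}
    (hQ : jordanDerivation a Q = C a * Q + C c * X 1) {m : Fin 2 →₀ ℕ} (hm : m.degree ≠ 1)
    (hshift : coeff m (X 1 * pderiv 0 Q) = 0) : coeff m Q = 0 := by
  have hX : coeff m (X 1 : MvPolynomial (Fin 2) K) = 0 := by
    rw [coeff_X, if_neg]
    rintro rfl
    exact hm (Finsupp.degree_single 1 1)
  have key := congrArg (coeff m) hQ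
  rw [coeff_jordanDerivation, hshift, coeff_add, coeff_C_mul, coeff_C_mul, hX] at key
  have hdeg : (m.degree : K) - 1 ≠ 0 := sub_ne_zero.mpr (Nat.cast_ne_one.mpr hm)
  have hfactor : (a * ((m.degree : K) - 1)) * coeff m Q = 0 := by linear_combination key
  exact (mul_eq_zero.mp hfactor).resolve_left (mul_ne_zero ha hdeg)

theorem isHomogeneous_one_of_jordanDerivation_eq (ha : a ≠ 0) {Q : MvPolynomial (Fin 2) K} {c : K}
    (hQ : jordanDerivation a Q = C a * Q + C c * X 1) : Q.IsHomogeneous 1 := by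
  suffices h : ∀ k m, m 1 = k → m.degree ≠ 1 → coeff m Q = 0 by
    intro m hm
    have hdeg : m.degree = 1 := not_imp_comm.mp (h (m 1) m rfl) hm
    rwa [Finsupp.degree_eq_weight_one] at hdeg
  -- The shift term `Y ∂/∂X` feeds the coefficient at `m` from one with a smaller `Y`-exponent.
  intro k
  induction k with
  | zero =>
    intro m hm1 hm
    refine coeff_eq_zero_of_jordanDerivation_eq ha hQ hm ?_
    rw [coeff_X_mul', if_neg (by simpa using hm1)]
  | succ k ih =>
    intro m hm1 hm
    obtain ⟨n, rfl⟩ : ∃ n, m = Finsupp.single 1 1 + n :=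
      exists_add_of_le (Finsupp.single_le_iff.mpr (by omega))
    refine coeff_eq_zero_of_jordanDerivation_eq ha hQ hm ?_
    rw [coeff_X_mul, coeff_pderiv, ih (n + Finsupp.single 0 1) (by simp at hm1 ⊢; omega), zero_mul]
    simpa [add_comm] using hm

theorem eq_of_jordanDerivation_eq (ha : a ≠ 0) {Q : MvPolynomial (Fin 2) K} {c : K}
    (hQ : jordanDerivation a Q = C a * Q + C c * X 1) :
    Q = C c * X 0 + C (coeff (Finsupp.single 1 1) Q) * X 1 := by
  have hlin := (isHomogeneous_one_of_jordanDerivation_eq ha hQ).eq_sum_C_mul_X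
  rw [Fin.sum_univ_two] at hlin
  set u := coeff (Finsupp.single 0 1) Q
  have hDQ : jordanDerivation a Q = C a * Q + C u * X 1 := by
    rw [hlin, jordanDerivation_C_mul_X_add_C_mul_X]
  have hu : u = c := by
    rw [hDQ, add_right_inj] at hQ
    exact C_injective _ _ (mul_right_cancel₀ (X_ne_zero 1) hQ)
  rwa [← hu]

end JordanBlockField

/-- Isotropy of the Jordan-block derivation `D = (aX + Y) ∂/∂X + aY ∂/∂Y`,
`a ≠ 0`: an automorphism commutes with `D` iff `ρ(X) = αX + βY`, `ρ(Y) = αY`. -/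
theorem isotropy_jordan_block_derivation
    {K : Type*} [Field K] [CharZero K]
    (a : K) (ha : a ≠ 0)
    (D : Derivation K (MvPolynomial (Fin 2) K) (MvPolynomial (Fin 2) K))
    (hDX : D (X 0) = C a * X 0 + X 1)
    (hDY : D (X 1) = C a * X 1)
    (ρ : MvPolynomial (Fin 2) K ≃ₐ[K] MvPolynomial (Fin 2) K) :
    (∀ g : MvPolynomial (Fin 2) K, ρ (D g) = D (ρ g)) ↔
      ∃ (α β : K), α ≠ 0 ∧
        ρ (X 0) = C α * X 0 + C β * X 1 ∧ ρ (X 1) = C α * X 1 := by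
  obtain rfl := eq_jordanDerivation hDX hDY
  have hρC (c : K) : ρ (C c) = C c := ρ.commutes c
  constructor
  · intro hρ
    set α := coeff (Finsupp.single 1 1) (ρ (X 1))
    have hY : ρ (X 1) = C α * X 1 := by
      simpa using eq_of_jordanDerivation_eq ha (c := 0)
        (by rw [← hρ, jordanDerivation_X_one, map_mul, hρC, C_0, zero_mul, add_zero])
    have hX := eq_of_jordanDerivation_eq ha (c := α)
      (by rw [← hρ, jordanDerivation_X_zero, map_add, map_mul, hρC, hY])
    refine ⟨α, _, fun hα ↦ X_ne_zero (R := K) 1 (ρ.injective ?_), hX, hY⟩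
    rw [hY, hα, C_0, zero_mul, map_zero]
  · rintro ⟨α, β, -, hX, hY⟩
    refine algHom_derivation_comm_of_forall_X ρ.toAlgHom _ _ (Fin.forall_fin_two.mpr ⟨?_, ?_⟩)
    · change ρ (jordanDerivation a (X 0)) = jordanDerivation a (ρ (X 0))
      rw [jordanDerivation_X_zero, map_add, map_mul, hρC, hX, hY,
        jordanDerivation_C_mul_X_add_C_mul_X]
    · change ρ (jordanDerivation a (X 1)) = jordanDerivation a (ρ (X 1))
      rw [jordanDerivation_X_one, map_mul, hρC, hY, Derivation.leibniz, derivation_C, smul_zero,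
        add_zero, jordanDerivation_X_one, smul_eq_mul, mul_left_comm]
end

section
/- Let B = ℂ[X,Y] and D the derivation with D(X) = 2πi·X, D(Y) = 0. Then exp(D) is the identity automorphism of B, but D ≠ 0; in particular the isotropy group of exp(D) is all of Aut(B), while the isotropy group of D consists only of the automorphisms (X,Y) ↦ (cX, aY+b) with c, a ∈ ℂ*, b ∈ ℂ. -/
open MvPolynomial Complex

/-!
`D = 2πi · X ∂/∂X` acts on `X^m Y^n` by `2πi m`, so `exp D` multiplies it by `e^{2πim} = 1`.

An automorphism `ρ` commuting with `D` preserves its eigenspaces, so `ρ X = X · h` and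
`ρ Y = q(Y)`, and likewise for `ρ⁻¹`. Then `ρ (ρ⁻¹ X) = X` makes `h` a unit, hence a constant,
and `ρ (ρ⁻¹ Y) = Y` gives `q` a compositional inverse, hence degree one. Conversely, the elements on
which `ρ ∘ D` and `D ∘ ρ` agree form a subalgebra, so it suffices to check `X` and `Y`.
-/

section Derivation

variable {R A : Type*} [CommSemiring R] [CommSemiring A] [Algebra R A]

theorem AlgHom.map_derivation_eq_of_adjoin_eq_top {s : Set A} (hs : Algebra.adjoin R s = ⊤)
    (ρ : A →ₐ[R] A) (D : Derivation R A A) (h : ∀ x ∈ s, ρ (D x) = D (ρ x)) (x : A) :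
    ρ (D x) = D (ρ x) := by
  have hx : x ∈ Algebra.adjoin R s := hs ▸ Algebra.mem_top
  induction hx using Algebra.adjoin_induction with
  | mem x hx => exact h x hx
  | algebraMap r => simp
  | add x y _ _ hx hy => simp [hx, hy]
  | mul x y _ _ hx hy => simp [Derivation.leibniz, hx, hy]

theorem AlgEquiv.symm_map_derivation_eq (ρ : A ≃ₐ[R] A) (D : Derivation R A A)
    (h : ∀ x, ρ (D x) = D (ρ x)) (x : A) : ρ.symm (D x) = D (ρ.symm x) := by
  rw [ρ.symm_apply_eq, h, ρ.apply_symm_apply]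

end Derivation

namespace MvPolynomial

section CommSemiring

variable {σ R : Type*} [CommSemiring R]

theorem coeff_X_mul_pderiv (i : σ) (g : MvPolynomial σ R) (t : σ →₀ ℕ) :
    coeff t (X i * pderiv i g) = t i • coeff t g := by
  classical
  induction g using MvPolynomial.induction_on' with
  | monomial s a =>
    rw [X_mul_pderiv_monomial, coeff_smul, coeff_monomial]
    split_ifs with h
    · rw [h]
    · simp
  | add p q hp hq => simp only [mul_add, map_add, coeff_add, hp, hq, smul_add]

theorem mem_supported_compl_of_X_mul_pderiv_eq_zero [CharZero R] [NoZeroDivisors R] {i : σ}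
    {g : MvPolynomial σ R} (h : X i * pderiv i g = 0) : g ∈ supported R {i}ᶜ := by
  rw [mem_supported]
  rintro j hj (rfl : j = i)
  obtain ⟨t, ht, hjt⟩ := (mem_vars_iff_mem_support j).1 hj
  have := coeff_X_mul_pderiv j g t
  rw [h, coeff_zero, nsmul_eq_mul] at this
  exact mul_ne_zero (Nat.cast_ne_zero.2 (Finsupp.mem_support_iff.1 hjt)) (mem_support_iff.1 ht)
    this.symm

theorem mem_supported_singleton_iff {i : σ} {g : MvPolynomial σ R} :
    g ∈ supported R {i} ↔ ∃ p : Polynomial R, Polynomial.aeval (X i) p = g := by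
  rw [supported_eq_adjoin_X, Set.image_singleton, Algebra.adjoin_singleton_eq_range_aeval]
  rfl

theorem map_aeval_X_of_map_X_eq_aeval {i : σ} (ρ : MvPolynomial σ R →ₐ[R] MvPolynomial σ R)
    {q : Polynomial R} (hq : ρ (X i) = Polynomial.aeval (X i) q) (p : Polynomial R) :
    ρ (Polynomial.aeval (X i) p) = Polynomial.aeval (X i) (p.comp q) := by
  rw [Polynomial.comp_eq_aeval, ← Polynomial.aeval_algHom_apply (Polynomial.aeval (X i)), ← hq,
    Polynomial.aeval_algHom_apply]

theorem derivation_eq_smul_pderiv_zero {k : R}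
    {D : Derivation R (MvPolynomial (Fin 2) R) (MvPolynomial (Fin 2) R)}
    (hDX : D (X 0) = C k * X 0) (hDY : D (X 1) = 0) :
    D = (C k * X 0 : MvPolynomial (Fin 2) R) • pderiv 0 :=
  derivation_ext fun i => by fin_cases i <;> simp [hDX, hDY]

end CommSemiring

section IsDomain

variable {σ R : Type*} [CommRing R] [IsDomain R]

theorem natDegree_eq_one_of_map_X_eq_aeval (ρ : MvPolynomial σ R ≃ₐ[R] MvPolynomial σ R)
    {i : σ} {q q' : Polynomial R} (hq : ρ (X i) = Polynomial.aeval (X i) q)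
    (hq' : ρ.symm (X i) = Polynomial.aeval (X i) q') : q.natDegree = 1 := by
  have hcomp : q'.comp q = Polynomial.X := by
    apply transcendental_iff_injective.1 (transcendental_X R i)
    rw [← map_aeval_X_of_map_X_eq_aeval ρ.toAlgHom hq, ← hq', Polynomial.aeval_X]
    exact ρ.apply_symm_apply (X i)
  have := congrArg Polynomial.natDegree hcomp
  rw [Polynomial.natDegree_comp, Polynomial.natDegree_X] at this
  exact Nat.eq_one_of_mul_eq_one_left this

theorem isUnit_of_map_X_eq_X_mul (ρ : MvPolynomial σ R ≃ₐ[R] MvPolynomial σ R) {i : σ}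
    {h h' : MvPolynomial σ R} (hh : ρ (X i) = X i * h) (hh' : ρ.symm (X i) = X i * h') :
    IsUnit h := by
  refine IsUnit.of_mul_eq_one (ρ h') (mul_left_cancel₀ (X_ne_zero i) ?_)
  calc X i * (h * ρ h') = ρ (X i * h') := by rw [map_mul, hh, mul_assoc]
    _ = X i * 1 := by rw [← hh', ρ.apply_symm_apply, mul_one]

end IsDomain

section TwoVariables

variable {K : Type*} [Field K] [CharZero K] {k : K}
  {D : Derivation K (MvPolynomial (Fin 2) K) (MvPolynomial (Fin 2) K)}

theorem map_X_eq_of_map_derivation_eq (hk : k ≠ 0) (hDX : D (X 0) = C k * X 0)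
    (hDY : D (X 1) = 0) (τ : MvPolynomial (Fin 2) K ≃ₐ[K] MvPolynomial (Fin 2) K)
    (hτ : ∀ g, τ (D g) = D (τ g)) :
    τ (X 0) = X 0 * pderiv 0 (τ (X 0)) ∧
      ∃ q : Polynomial K, τ (X 1) = Polynomial.aeval (X 1) q := by
  have hD (g) : D g = C k * (X 0 * pderiv 0 g) := by
    rw [derivation_eq_smul_pderiv_zero hDX hDY, Derivation.smul_apply, smul_eq_mul, mul_assoc]
  have hCk : (C k : MvPolynomial (Fin 2) K) ≠ 0 := C_ne_zero.2 hk
  constructor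
  · have h := hτ (X 0)
    have hτC : τ (C k) = C k := algHom_C τ.toAlgHom k
    rw [hDX, map_mul, hτC, hD] at h
    exact mul_left_cancel₀ hCk h
  · have h := hτ (X 1)
    rw [hDY, map_zero, hD, eq_comm, mul_eq_zero, or_iff_right hCk] at h
    have hsupp := mem_supported_compl_of_X_mul_pderiv_eq_zero h
    rw [show ({0}ᶜ : Set (Fin 2)) = {1} by ext j; fin_cases j <;> simp,
      mem_supported_singleton_iff] at hsupp
    obtain ⟨q, hq⟩ := hsupp
    exact ⟨q, hq.symm⟩

theorem map_derivation_eq_iff_map_X_eq (hk : k ≠ 0) (hDX : D (X 0) = C k * X 0)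
    (hDY : D (X 1) = 0) (ρ : MvPolynomial (Fin 2) K ≃ₐ[K] MvPolynomial (Fin 2) K) :
    (∀ g, ρ (D g) = D (ρ g)) ↔
      ∃ c a b : K, c ≠ 0 ∧ a ≠ 0 ∧ ρ (X 0) = C c * X 0 ∧ ρ (X 1) = C a * X 1 + C b := by
  constructor
  · intro hρ
    obtain ⟨hρX, q, hq⟩ := map_X_eq_of_map_derivation_eq hk hDX hDY ρ hρ
    obtain ⟨hρX', q', hq'⟩ :=
      map_X_eq_of_map_derivation_eq hk hDX hDY ρ.symm (ρ.symm_map_derivation_eq D hρ)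
    obtain ⟨c, hc, hcC⟩ :=
      isUnit_iff_eq_C_of_isReduced.1 (isUnit_of_map_X_eq_X_mul ρ hρX hρX')
    obtain ⟨a, ha, b, rfl⟩ :=
      Polynomial.natDegree_eq_one.1 (natDegree_eq_one_of_map_X_eq_aeval ρ hq hq')
    refine ⟨c, a, b, hc.ne_zero, ha, by rw [hρX, hcC, mul_comm], by simp [hq, algebraMap_eq]⟩
  · rintro ⟨c, a, b, -, -, hρX, hρY⟩
    refine AlgHom.map_derivation_eq_of_adjoin_eq_top adjoin_range_X ρ.toAlgHom D ?_
    rintro _ ⟨i, rfl⟩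
    fin_cases i
    · simp [hρX, hDX, C_mul', smul_comm c k]
    · simp [hρY, hDY, C_mul']

end TwoVariables

end MvPolynomial

/-- For `D = 2πi X ∂/∂X` on `ℂ[X,Y]`: `exp(D)` (defined on monomials by
`X^m Y^n ↦ e^{2πim} X^m Y^n`) is the identity while `D ≠ 0`; the isotropy group
of `exp(D)` is all of `Aut(ℂ[X,Y])` while the isotropy group of `D` consists
exactly of the automorphisms `(X,Y) ↦ (cX, aY + b)`. -/
theorem semisimple_exp_identity_example
    (D : Derivation ℂ (MvPolynomial (Fin 2) ℂ) (MvPolynomial (Fin 2) ℂ))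
    (hDX : D (X 0) = C (2 * (Real.pi : ℂ) * I) * X 0)
    (hDY : D (X 1) = 0)
    (E : MvPolynomial (Fin 2) ℂ ≃ₐ[ℂ] MvPolynomial (Fin 2) ℂ)
    (hE : ∀ m n : ℕ, E (X 0 ^ m * X 1 ^ n)
      = Complex.exp (2 * (Real.pi : ℂ) * I * m) • (X 0 ^ m * X 1 ^ n)) :
    D ≠ 0 ∧
    E = AlgEquiv.refl ∧
    (∀ ρ : MvPolynomial (Fin 2) ℂ ≃ₐ[ℂ] MvPolynomial (Fin 2) ℂ,
      ρ.trans E = E.trans ρ) ∧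
    (∀ ρ : MvPolynomial (Fin 2) ℂ ≃ₐ[ℂ] MvPolynomial (Fin 2) ℂ,
      (∀ g : MvPolynomial (Fin 2) ℂ, ρ (D g) = D (ρ g)) ↔
        ∃ c a b : ℂ, c ≠ 0 ∧ a ≠ 0 ∧
          ρ (X 0) = C c * X 0 ∧ ρ (X 1) = C a * X 1 + C b) := by
  have hE_refl : E = AlgEquiv.refl := by
    refine AlgEquiv.coe_toAlgHom_injective (algHom_ext (Fin.forall_fin_two.2 ⟨?_, ?_⟩))
    · simpa [exp_two_pi_mul_I] using hE 1 0
    · simpa using hE 0 1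
  refine ⟨?_, hE_refl, fun ρ => by rw [hE_refl]; rfl,
    map_derivation_eq_iff_map_X_eq two_pi_I_ne_zero hDX hDY⟩
  rintro rfl
  simp [X_ne_zero] at hDX
end

section
/- Let ρ be a ℂ-algebra automorphism of ℂ[X,Y] commuting with the derivation D defined by D(X) = X, D(Y) = 0 (i.e. ρ(D(f)) = D(ρ(f)) for all f). Then ρ(X) = cX and ρ(Y) = aY + b for some c, a ∈ ℂ*, b ∈ ℂ. -/
/-!
With `D = X₀ ∂/∂X₀`, an automorphism commuting with `D` maps the eigenvector `X₀` into
`X₀ · ℂ[X₀, X₁]` and the kernel `ℂ[X₁]` of `D` into itself, and so does its inverse. Hence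
`X₀` and `ρ(X₀)` divide each other, so `ρ(X₀)` is a unit, i.e. nonzero constant, multiple of `X₀`;
and `ρ` restricts to an automorphism of the polynomial ring `ℂ[X₁]`, which must be affine
because `ρ(X₁) = P(X₁)`, `ρ⁻¹(X₁) = Q(X₁)` force `Q ∘ P = X`.
-/

open MvPolynomial

theorem Polynomial.natDegree_eq_one_of_comp_eq_X {R : Type*} [CommSemiring R] [NoZeroDivisors R]
    [Nontrivial R] {p q : Polynomial R} (h : p.comp q = Polynomial.X) : q.natDegree = 1 :=
  Nat.eq_one_of_mul_eq_one_left <| by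
    rw [← Polynomial.natDegree_comp, h, Polynomial.natDegree_X]

theorem AlgEquiv.exists_apply_eq_affine_of_mem_adjoin {R A : Type*} [CommRing R] [IsDomain R]
    [CommRing A] [Algebra R A] {x : A} (hx : Transcendental R x) (ρ : A ≃ₐ[R] A)
    (h : ρ x ∈ Algebra.adjoin R {x}) (h' : ρ.symm x ∈ Algebra.adjoin R {x}) :
    ∃ a b : R, a ≠ 0 ∧ ρ x = algebraMap R A a * x + algebraMap R A b := by
  rw [Algebra.adjoin_singleton_eq_range_aeval] at h h'
  obtain ⟨p, hp : Polynomial.aeval x p = ρ x⟩ := h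
  obtain ⟨q, hq : Polynomial.aeval x q = ρ.symm x⟩ := h'
  have hqp : q.comp p = Polynomial.X := transcendental_iff_injective.mp hx <| by
    change Polynomial.aeval x (q.comp p) = Polynomial.aeval x Polynomial.X
    rw [Polynomial.aeval_comp, Polynomial.aeval_X, hp, Polynomial.aeval_algHom_apply ρ, hq,
      ρ.apply_symm_apply]
  have hp1 := Polynomial.natDegree_eq_one_of_comp_eq_X hqp
  have hp0 : p ≠ 0 := by
    rintro rfl
    simp at hp1
  refine ⟨p.coeff 1, p.coeff 0, ?_, ?_⟩
  · rw [← hp1]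
    exact Polynomial.leadingCoeff_ne_zero.mpr hp0
  · conv_lhs => rw [← hp, Polynomial.eq_X_add_C_of_natDegree_le_one hp1.le]
    simp

theorem MvPolynomial.notMem_vars_of_pderiv_eq_zero {σ R : Type*} [CommRing R] [NoZeroDivisors R]
    [CharZero R] {i : σ} {p : MvPolynomial σ R} (h : pderiv i p = 0) : i ∉ p.vars := by
  classical
  rw [mem_vars_iff_mem_support]
  rintro ⟨d, hd, hi⟩
  have hd' : d - Finsupp.single i 1 + Finsupp.single i 1 = d := by
    refine tsub_add_cancel_of_le ?_
    simpa [Finsupp.single_le_iff, Nat.one_le_iff_ne_zero] using hi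
  have := coeff_pderiv (i := i) p (d - Finsupp.single i 1)
  rw [h, hd', coeff_zero, eq_comm, mul_eq_zero] at this
  exact this.elim (mem_support_iff.mp hd) (Nat.cast_add_one_ne_zero _)

namespace MvPolynomial

variable {R F : Type*} [CommRing R] [FunLike F (MvPolynomial (Fin 2) R) (MvPolynomial (Fin 2) R)]
  (φ : F)
  (hφ : ∀ f, φ (X 0 * pderiv 0 f) = X 0 * pderiv 0 (φ f))
include hφ

theorem X_zero_dvd_of_commute_X_zero_mul_pderiv : X 0 ∣ φ (X 0) :=
  ⟨pderiv 0 (φ (X 0)), by simpa using hφ (X 0)⟩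

theorem mem_adjoin_X_one_of_commute_X_zero_mul_pderiv [IsDomain R] [CharZero R]
    [AlgHomClass F R (MvPolynomial (Fin 2) R) (MvPolynomial (Fin 2) R)] :
    φ (X 1) ∈ Algebra.adjoin R {X 1} := by
  have h0 : pderiv 0 (φ (X 1)) = 0 := by
    have := hφ (X 1)
    simp only [pderiv_X, Pi.single_apply, one_ne_zero, if_false, mul_zero, map_zero] at this
    exact (mul_eq_zero.mp this.symm).resolve_left (X_ne_zero 0)
  rw [← Set.image_singleton, ← supported_eq_adjoin_X, mem_supported]
  intro i hi
  fin_cases i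
  · exact absurd hi (notMem_vars_of_pderiv_eq_zero h0)
  · rfl

end MvPolynomial

/-- If `ρ` is a `ℂ`-algebra automorphism of `ℂ[X,Y]` commuting with
`D = X ∂/∂X`, then `ρ(X) = cX` and `ρ(Y) = aY + b` with `c, a ∈ ℂ*`. -/
theorem isotropy_X_ddX
    (D : Derivation ℂ (MvPolynomial (Fin 2) ℂ) (MvPolynomial (Fin 2) ℂ))
    (hDX : D (X 0) = X 0)
    (hDY : D (X 1) = 0)
    (ρ : MvPolynomial (Fin 2) ℂ ≃ₐ[ℂ] MvPolynomial (Fin 2) ℂ)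
    (hcomm : ∀ f : MvPolynomial (Fin 2) ℂ, ρ (D f) = D (ρ f)) :
    ∃ c a b : ℂ, c ≠ 0 ∧ a ≠ 0 ∧
      ρ (X 0) = C c * X 0 ∧ ρ (X 1) = C a * X 1 + C b := by
  have hD : D = (X 0 : MvPolynomial (Fin 2) ℂ) • pderiv 0 :=
    derivation_ext fun i => by fin_cases i <;> simp [hDX, hDY]
  have hρ : ∀ f, ρ (X 0 * pderiv 0 f) = X 0 * pderiv 0 (ρ f) := by
    simpa [hD] using hcomm
  have hρ_symm : ∀ f, ρ.symm (X 0 * pderiv 0 f) = X 0 * pderiv 0 (ρ.symm f) := fun f => by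
    rw [ρ.symm_apply_eq, hρ, ρ.apply_symm_apply]
  obtain ⟨u, hu⟩ := associated_of_dvd_dvd (X_zero_dvd_of_commute_X_zero_mul_pderiv ρ hρ)
    (by simpa using map_dvd ρ (X_zero_dvd_of_commute_X_zero_mul_pderiv ρ.symm hρ_symm))
  obtain ⟨c, hc, hcu⟩ := isUnit_iff_eq_C_of_isReduced.mp u.isUnit
  obtain ⟨a, b, ha, hab⟩ := ρ.exists_apply_eq_affine_of_mem_adjoin (transcendental_X ℂ 1)
    (mem_adjoin_X_one_of_commute_X_zero_mul_pderiv ρ hρ)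
    (mem_adjoin_X_one_of_commute_X_zero_mul_pderiv ρ.symm hρ_symm)
  exact ⟨c, a, b, hc.ne_zero, ha, by rw [← hu, hcu, mul_comm], by simpa [algebraMap_eq] using hab⟩
end
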